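/- arXiv:2303.06063 — 5 statements merged into one kernel-verified Lean document; each statement's English description precedes it below -/
import Mathlib

section
/- Let K be a field of characteristic 0 and let A be a finitely generated K-algebra that is an integral domain, with fraction field F. Then K is existentially closed in F if and only if for every nonzero a ∈ A there exists a K-algebra homomorphism φ : A → K with φ(a) ≠ 0 (i.e., the K-rational points of Spec A are Zariski dense). -/
universe u v

/-- `K` is existentially closed in the field extension `L`: every finite system of
polynomial equations and inequations with coefficients in `K` that has a solution
in `L` also has a solution in `K`. -/
def ExistentiallyClosedIn (K : Type u) (L : Type v) [Field K] [Field L]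
    [Algebra K L] : Prop :=
  ∀ (n : ℕ) (s t : Finset (MvPolynomial (Fin n) K)),
    (∃ x : Fin n → L, (∀ p ∈ s, MvPolynomial.aeval x p = 0) ∧
      (∀ q ∈ t, MvPolynomial.aeval x q ≠ 0)) →
    (∃ x : Fin n → K, (∀ p ∈ s, MvPolynomial.aeval x p = 0) ∧
      (∀ q ∈ t, MvPolynomial.aeval x q ≠ 0))

/-- Let `K` be a field of characteristic 0 and `A` a finitely generated `K`-algebra
that is an integral domain with fraction field `F`.  Then `K` is existentially
closed in `F` iff the `K`-points of `Spec A` are Zariski dense. -/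
theorem stmt0 (K A F : Type u) [Field K] [CharZero K]
    [CommRing A] [IsDomain A] [Algebra K A] (hfg : Algebra.FiniteType K A)
    [Field F] [Algebra A F] [IsFractionRing A F] [Algebra K F]
    [IsScalarTower K A F] :
    ExistentiallyClosedIn K F ↔
      ∀ a : A, a ≠ 0 → ∃ φ : A →ₐ[K] K, φ a ≠ 0 := by
  have hinj : Function.Injective (algebraMap A F) := IsFractionRing.injective A F
  constructor
  · -- existentially closed ⇒ dense K-points
    intro hec a ha
    obtain ⟨n, f, hf⟩ := Algebra.FiniteType.iff_quotient_mvPolynomial''.mp hfg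
    obtain ⟨S, hS⟩ := (IsNoetherian.noetherian (RingHom.ker f.toRingHom) : _)
    obtain ⟨P, hP⟩ := hf a
    set x : Fin n → F := fun i => algebraMap A F (f (MvPolynomial.X i)) with hxdef
    have hx : ∀ p : MvPolynomial (Fin n) K,
        MvPolynomial.aeval x p = algebraMap A F (f p) := by
      intro p
      have : (algebraMap A F (f p)) = ((IsScalarTower.toAlgHom K A F).comp f) p := rfl
      rw [this, MvPolynomial.aeval_unique ((IsScalarTower.toAlgHom K A F).comp f)]
      rfl
    have hsol : ∃ y : Fin n → F, (∀ p ∈ S, MvPolynomial.aeval y p = 0) ∧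
        (∀ q ∈ ({P} : Finset (MvPolynomial (Fin n) K)), MvPolynomial.aeval y q ≠ 0) := by
      refine ⟨x, fun p hp => ?_, fun q hq => ?_⟩
      · have hker : p ∈ RingHom.ker f.toRingHom := by
          rw [← hS]; exact Ideal.subset_span hp
        rw [hx]
        simpa using RingHom.mem_ker.mp hker
      · rw [Finset.mem_singleton] at hq
        subst hq
        rw [hx, hP]
        intro h
        exact ha (hinj (by simpa using h))
    obtain ⟨y, hy1, hy2⟩ := hec n S {P} hsol
    have hkerle : RingHom.ker f.toRingHom ≤
        RingHom.ker (MvPolynomial.aeval (R := K) y : MvPolynomial (Fin n) K →ₐ[K] K) := by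
      rw [← hS, Submodule.span_le]
      intro p hp
      exact RingHom.mem_ker.mpr (hy1 p hp)
    refine ⟨(Ideal.Quotient.liftₐ (RingHom.ker f) (MvPolynomial.aeval y)
        (fun z hz => RingHom.mem_ker.mp (hkerle hz))).comp
        (Ideal.quotientKerAlgEquivOfSurjective hf).symm.toAlgHom, ?_⟩
    have h1 : (Ideal.quotientKerAlgEquivOfSurjective hf).symm a = Ideal.Quotient.mk _ P := by
      apply (Ideal.quotientKerAlgEquivOfSurjective hf).injective
      rw [AlgEquiv.apply_symm_apply]
      rw [← hP]
      rfl
    have h2 := hy2 P (Finset.mem_singleton_self P)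
    simp only [AlgHom.coe_comp, AlgEquiv.toAlgHom_eq_coe, AlgHom.coe_coe, Function.comp_apply]
    erw [h1, Ideal.Quotient.liftₐ_apply, Ideal.Quotient.lift_mk]
    exact h2
  · -- dense K-points ⇒ existentially closed
    rintro hd n s t ⟨x, hxs, hxt⟩
    obtain ⟨b, hb⟩ := IsLocalization.exist_integer_multiples (nonZeroDivisors A) Finset.univ x
    choose r hr using fun i => hb i (Finset.mem_univ i)
    have hr' : ∀ i, algebraMap A F (r i) = algebraMap A F (b : A) * x i := fun i =>
      (hr i).trans (Algebra.smul_def _ _)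
    have hb0 : (b : A) ≠ 0 := nonZeroDivisors.ne_zero b.2
    have hbF : algebraMap A F (b : A) ≠ 0 := fun h => hb0 (hinj (by simpa using h))
    have key : ∀ p : MvPolynomial (Fin n) K, ∃ (m : ℕ) (c : A),
        (algebraMap A F (b : A)) ^ m * MvPolynomial.aeval x p = algebraMap A F c ∧
        ∀ φ : A →ₐ[K] K, φ b ≠ 0 →
          φ c = φ b ^ m * MvPolynomial.aeval (fun i => φ (r i) / φ (b : A)) p := by
      intro p
      induction p using MvPolynomial.induction_on with
      | C k =>
          refine ⟨0, algebraMap K A k, ?_, fun φ hφ => ?_⟩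
          · simp [← IsScalarTower.algebraMap_apply]
          · simp
      | add p q hp hq =>
          obtain ⟨m₁, c₁, h₁, g₁⟩ := hp
          obtain ⟨m₂, c₂, h₂, g₂⟩ := hq
          refine ⟨m₁ + m₂, (b : A) ^ m₂ * c₁ + (b : A) ^ m₁ * c₂, ?_, fun φ hφ => ?_⟩
          · simp only [map_add, map_mul, map_pow]
            linear_combination (algebraMap A F (b : A)) ^ m₂ * h₁ +
              (algebraMap A F (b : A)) ^ m₁ * h₂
          · simp only [map_add, map_mul, map_pow]
            linear_combination φ (b : A) ^ m₂ * g₁ φ hφ + φ (b : A) ^ m₁ * g₂ φ hφ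
      | mul_X p i hp =>
          obtain ⟨m, c, h1, g1⟩ := hp
          refine ⟨m + 1, c * r i, ?_, fun φ hφ => ?_⟩
          · simp only [map_mul, MvPolynomial.aeval_X]
            linear_combination (algebraMap A F (b : A) * x i) * h1 -
              algebraMap A F c * hr' i
          · simp only [map_mul]
            rw [g1 φ hφ]
            simp only [MvPolynomial.aeval_X]
            field_simp
            ring
    choose m c hc hφc using key
    have hcq : ∀ q ∈ t, c q ≠ 0 := by
      intro q hq h0
      have := hc q
      rw [h0, map_zero] at this
      exact (mul_ne_zero (pow_ne_zero _ hbF) (hxt q hq)) this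
    have ha0 : (b : A) * ∏ q ∈ t, c q ≠ 0 :=
      mul_ne_zero hb0 (Finset.prod_ne_zero_iff.mpr hcq)
    obtain ⟨φ, hφa⟩ := hd _ ha0
    rw [map_mul, map_prod] at hφa
    have hφb : φ (b : A) ≠ 0 := fun h => hφa (by rw [h, zero_mul])
    have hφcq : ∀ q ∈ t, φ (c q) ≠ 0 := by
      have := right_ne_zero_of_mul hφa
      exact fun q hq => Finset.prod_ne_zero_iff.mp this q hq
    refine ⟨fun i => φ (r i) / φ (b : A), fun p hp => ?_, fun q hq => ?_⟩
    · have h1 := hc p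
      rw [hxs p hp, mul_zero] at h1
      have h2 : c p = 0 := hinj (by rw [← h1, map_zero])
      have h3 := hφc p φ hφb
      rw [h2, map_zero] at h3
      exact ((mul_eq_zero.mp h3.symm).resolve_left (pow_ne_zero _ hφb))
    · intro h0
      have h3 := hφc q φ hφb
      rw [h0, mul_zero] at h3
      exact hφcq q hq h3
end

section
/- Let K be a perfect field and let M1 and M2 be field extensions of K such that for every polynomial p ∈ K[X], p has a root in M1 if and only if p has a root in M2. Then the relative algebraic closure of K in M1 and the relative algebraic closure of K in M2 (i.e., the subfields of elements algebraic over K) are isomorphic as K-algebras. -/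
universe u v w

lemma aux_key {K : Type u} (M : Type v) [Field K] [Field M] [Algebra K M]
    (p : Polynomial K) :
    (∃ x : integralClosure K M, Polynomial.aeval x p = 0) ↔
      (∃ x : M, Polynomial.aeval x p = 0) := by
  constructor
  · rintro ⟨x, hx⟩
    refine ⟨x, ?_⟩
    rw [Subalgebra.aeval_coe, hx, Subalgebra.coe_zero]
  · rintro ⟨x, hx⟩
    rcases eq_or_ne p 0 with rfl | hp
    · exact ⟨0, by simp⟩
    · have hxi : IsIntegral K x := (IsAlgebraic.isIntegral ⟨p, hp, hx⟩)
      refine ⟨⟨x, hxi⟩, ?_⟩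
      have hc : Polynomial.aeval ((⟨x, hxi⟩ : integralClosure K M) : M) p = 0 := hx
      rw [Subalgebra.aeval_coe, Subalgebra.coe_eq_zero] at hc
      exact hc

/-- If `K` is a perfect field and `M1`, `M2` are extensions such that every
polynomial over `K` has a root in `M1` iff it has a root in `M2`, then the
relative algebraic closures of `K` in `M1` and in `M2` are isomorphic as
`K`-algebras. -/
theorem stmt3 (K : Type u) (M1 : Type v) (M2 : Type w)
    [Field K] [PerfectField K]
    [Field M1] [Field M2] [Algebra K M1] [Algebra K M2]
    (h : ∀ p : Polynomial K,
      (∃ x : M1, Polynomial.aeval x p = 0) ↔ (∃ x : M2, Polynomial.aeval x p = 0)) :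
    Nonempty (integralClosure K M1 ≃ₐ[K] integralClosure K M2) := by
  have h1 : Algebra.IsAlgebraic K (integralClosure K M1) :=
    Algebra.IsIntegral.isAlgebraic
  have h2 : Algebra.IsAlgebraic K (integralClosure K M2) :=
    Algebra.IsIntegral.isAlgebraic
  let F1 := Algebra.IsAlgebraic.toIntermediateField (integralClosure K M1)
  let F2 := Algebra.IsAlgebraic.toIntermediateField (integralClosure K M2)
  haveI hf1 : Algebra.IsAlgebraic K F1 := h1
  haveI hf2 : Algebra.IsAlgebraic K F2 := h2
  have key : Nonempty (F1 ≃ₐ[K] F2) :=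
    Field.nonempty_algEquiv_of_aeval_eq_zero_eq (F := K) (E := F1) (K := F2)
      (by
        ext p
        simp only [Set.mem_setOf_eq]
        exact (aux_key M1 p).trans ((h p).trans (aux_key M2 p).symm))
  exact key
end

section
/- Let K ⊆ M and K ⊆ F be field extensions of characteristic 0 with K relatively algebraically closed in M, and let ι : F → M be a field embedding fixing K pointwise. Fix algebraic closures K̄ of K, F̄ of F, and M̄ of M, together with embeddings j_F : K̄ → F̄ and j_M : K̄ → M̄ extending the inclusions K ⊆ F and K ⊆ M. Then there exists a field embedding ι̂ : F̄ → M̄ extending ι (that is, ι̂ restricted to F equals ι followed by the inclusion M ⊆ M̄) such that ι̂ ∘ j_F = j_M. -/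
universe u

open Polynomial in
lemma aux_minpoly_natDegree {K F Fbar : Type*} [Field K] [Field F] [Field Fbar]
    [Algebra K F] [Algebra F Fbar] [Algebra K Fbar] [IsScalarTower K F Fbar]
    (hracF : ∀ x : F, IsIntegral K x → x ∈ (algebraMap K F).range)
    (β : Fbar) (hβ : IsIntegral K β) :
    (minpoly F β).natDegree = (minpoly K β).natDegree := by
  have hβF : IsIntegral F β := hβ.tower_top
  have hdvd : minpoly F β ∣ (minpoly K β).map (algebraMap K F) :=
    minpoly.dvd F β (by rw [Polynomial.aeval_map_algebraMap]; exact minpoly.aeval K β)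
  have hle : (minpoly F β).natDegree ≤ (minpoly K β).natDegree := by
    have := Polynomial.natDegree_le_of_dvd hdvd
      ((minpoly.monic hβ).map (algebraMap K F)).ne_zero
    rwa [Polynomial.natDegree_map] at this
  refine le_antisymm hle ?_
  have hlift := integralClosure.mem_lifts_of_monic_of_dvd_map F
    (minpoly.monic hβ) (minpoly.monic hβF) hdvd
  have hcoeffs : minpoly F β ∈ Polynomial.lifts (algebraMap K F) := by
    rw [Polynomial.lifts_iff_coeff_lifts] at hlift ⊢
    intro n
    obtain ⟨c, hc⟩ := hlift n
    have h2 : IsIntegral K (c : F) := c.2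
    have hc' : (c : F) = (minpoly F β).coeff n := hc
    exact hc' ▸ hracF _ h2
  obtain ⟨q₀, hq₀⟩ := (Polynomial.mem_lifts _).1 hcoeffs
  have hq0ne : q₀ ≠ 0 := by
    rintro rfl
    rw [Polynomial.map_zero] at hq₀
    exact minpoly.ne_zero hβF hq₀.symm
  have haev : (Polynomial.aeval β) q₀ = 0 := by
    have := minpoly.aeval F β
    rw [← hq₀, Polynomial.aeval_map_algebraMap] at this
    exact this
  have hdvd2 : minpoly K β ∣ q₀ := minpoly.dvd K β haev
  calc (minpoly K β).natDegree ≤ q₀.natDegree := Polynomial.natDegree_le_of_dvd hdvd2 hq0ne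
    _ = (minpoly F β).natDegree := by rw [← hq₀, Polynomial.natDegree_map]

open scoped TensorProduct

set_option maxHeartbeats 1000000
set_option synthInstance.maxHeartbeats 400000

/-- Extension of algebraic closure embeddings compatible with a fixed embedding
of the algebraic closure of the base, when `K` is relatively algebraically
closed in `M`. -/
theorem stmt4 (K M F Kbar Fbar Mbar : Type u)
    [Field K] [CharZero K] [Field M] [Field F]
    [Algebra K M] [Algebra K F]
    (hrac : ∀ x : M, IsAlgebraic K x → x ∈ (algebraMap K M).range)
    (ι : F →ₐ[K] M)
    [Field Kbar] [Algebra K Kbar] [IsAlgClosure K Kbar]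
    [Field Fbar] [Algebra F Fbar] [IsAlgClosure F Fbar]
    [Algebra K Fbar] [IsScalarTower K F Fbar]
    [Field Mbar] [Algebra M Mbar] [IsAlgClosure M Mbar]
    [Algebra K Mbar] [IsScalarTower K M Mbar]
    (jF : Kbar →ₐ[K] Fbar) (jM : Kbar →ₐ[K] Mbar) :
    ∃ ιhat : Fbar →+* Mbar,
      (∀ x : F, ιhat (algebraMap F Fbar x) = algebraMap M Mbar (ι x)) ∧
      (∀ x : Kbar, ιhat (jF x) = jM x) := by
  classical
  have hι : Function.Injective ι := ι.toRingHom.injective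
  have hracF : ∀ x : F, IsIntegral K x → x ∈ (algebraMap K F).range := by
    intro x hx
    obtain ⟨k, hk⟩ := hrac (ι x) (hx.map ι).isAlgebraic
    refine ⟨k, hι ?_⟩
    rw [ι.commutes, hk]
  letI : Algebra F Mbar := ((algebraMap M Mbar).comp ι.toRingHom).toAlgebra
  haveI : IsScalarTower K F Mbar := IsScalarTower.of_algebraMap_eq fun k => by
    show algebraMap K Mbar k = algebraMap M Mbar (ι (algebraMap K F k))
    rw [ι.commutes, ← IsScalarTower.algebraMap_apply]
  haveI : Algebra.IsAlgebraic K Kbar := IsAlgClosure.isAlgebraic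
  haveI : Algebra.IsAlgebraic F Fbar := IsAlgClosure.isAlgebraic
  let f' : F ⊗[K] Kbar →ₐ[F] Fbar :=
    Algebra.TensorProduct.lift (Algebra.ofId F Fbar) jF fun _ _ => Commute.all _ _
  let g' : F ⊗[K] Kbar →ₐ[F] Mbar :=
    Algebra.TensorProduct.lift (Algebra.ofId F Mbar) jM fun _ _ => Commute.all _ _
  -- injectivity of f'
  have hinj : Function.Injective f' := by
    rw [injective_iff_map_eq_zero]
    intro x hx
    obtain ⟨s, rfl⟩ := TensorProduct.exists_finset x
    set T : Set Kbar := ↑(s.image Prod.snd) with hT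
    let E : IntermediateField K Kbar := IntermediateField.adjoin K T
    haveI : FiniteDimensional K E :=
      IntermediateField.finiteDimensional_adjoin fun x _ => Algebra.IsIntegral.isIntegral x
    obtain ⟨α, hα⟩ := Field.exists_primitive_element K E
    set β : Kbar := (E.val α) with hβ
    have hβint : IsIntegral K β := Algebra.IsIntegral.isIntegral β
    set n : ℕ := (minpoly K β).natDegree with hn
    have hfr : Module.finrank K E = n := by
      rw [← IntermediateField.finrank_top' (F := K) (E := E), ← hα,
        IntermediateField.adjoin.finrank (Algebra.IsIntegral.isIntegral α), hn, hβ,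
        minpoly.algHom_eq E.val (Subtype.val_injective) α]
    let φ : F ⊗[K] E →ₐ[F] Fbar :=
      Algebra.TensorProduct.lift (Algebra.ofId F Fbar) (jF.comp E.val) fun _ _ => Commute.all _ _
    haveI : FiniteDimensional F (F ⊗[K] E) := Module.Finite.base_change K F E
    have hdim : Module.finrank F (F ⊗[K] E) = n := by
      rw [Module.finrank_baseChange, hfr]
    have hdeg : (minpoly F (jF β)).natDegree = n := by
      rw [aux_minpoly_natDegree hracF (jF β) (hβint.map jF), hn,
        minpoly.algHom_eq jF jF.toRingHom.injective β]
    have hli : LinearIndependent F (fun i : Fin n => (jF β) ^ (i : ℕ)) := by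
      have := linearIndependent_pow (K := F) (jF β)
      rwa [hdeg] at this
    have hmem : ∀ i : Fin n, (jF β) ^ (i : ℕ) ∈ LinearMap.range φ.toLinearMap := by
      intro i
      refine ⟨(1 : F) ⊗ₜ (α ^ (i : ℕ) : E), ?_⟩
      show φ ((1 : F) ⊗ₜ (α ^ (i : ℕ) : E)) = _
      rw [Algebra.TensorProduct.lift_tmul]
      simp only [map_one, one_mul, AlgHom.comp_apply, map_pow]
      rfl
    haveI : FiniteDimensional F (LinearMap.range φ.toLinearMap) :=
      Module.Finite.range φ.toLinearMap
    have hrange : n ≤ Module.finrank F (LinearMap.range φ.toLinearMap) := by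
      let v : Fin n → LinearMap.range φ.toLinearMap := fun i => ⟨(jF β) ^ (i : ℕ), hmem i⟩
      have hv : LinearIndependent F v := by
        apply LinearIndependent.of_comp (LinearMap.range φ.toLinearMap).subtype
        exact hli
      simpa using hv.fintype_card_le_finrank
    have hker : LinearMap.ker φ.toLinearMap = ⊥ := by
      have h1 := LinearMap.finrank_range_add_finrank_ker φ.toLinearMap
      rw [hdim] at h1
      have h3 : Module.finrank F (LinearMap.ker φ.toLinearMap) = 0 := by omega
      exact Submodule.finrank_eq_zero.mp h3
    have hφinj : Function.Injective φ := by
      have := LinearMap.ker_eq_bot.mp hker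
      exact this
    have hmemE : ∀ p ∈ s, (p : F × Kbar).2 ∈ E := by
      intro p hp
      exact IntermediateField.subset_adjoin K T (by
        rw [hT]
        exact_mod_cast Finset.mem_image_of_mem Prod.snd hp)
    let x' : F ⊗[K] E := ∑ p ∈ s.attach, (p : F × Kbar).1 ⊗ₜ
      (⟨(p : F × Kbar).2, hmemE p p.2⟩ : E)
    have hφx' : φ x' = f' (∑ p ∈ s, p.1 ⊗ₜ p.2) := by
      rw [map_sum, map_sum]
      rw [← Finset.sum_attach s (fun p => f' (p.1 ⊗ₜ[K] p.2))]
      refine Finset.sum_congr rfl fun p _ => ?_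
      show φ _ = f' _
      rw [Algebra.TensorProduct.lift_tmul, Algebra.TensorProduct.lift_tmul]
      rfl
    have hx'0 : x' = 0 := hφinj (by rw [hφx', hx]; exact (map_zero φ).symm)
    have hback : (∑ p ∈ s, p.1 ⊗ₜ[K] p.2) =
        (Algebra.TensorProduct.map (AlgHom.id K F) E.val) x' := by
      rw [map_sum]
      rw [← Finset.sum_attach s (fun p => p.1 ⊗ₜ[K] p.2)]
      refine Finset.sum_congr rfl fun p _ => ?_
      rw [Algebra.TensorProduct.map_tmul]
      rfl
    rw [hback, hx'0, map_zero]
  -- the range of f' is a field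
  let N : Subalgebra F Fbar := f'.range
  letI : Field N := (Subalgebra.isField_of_algebraic N).toField
  let e : (F ⊗[K] Kbar) ≃ₐ[F] N := AlgEquiv.ofInjective f' hinj
  let h : N →ₐ[F] Mbar := g'.comp (e.symm : N →ₐ[F] F ⊗[K] Kbar)
  letI : Algebra N Mbar := h.toRingHom.toAlgebra
  haveI : NoZeroSMulDivisors N Fbar :=
    inferInstance
  haveI : NoZeroSMulDivisors N Mbar :=
    inferInstance
  haveI : Algebra.IsAlgebraic N Fbar := Algebra.IsAlgebraic.tower_top (K := F) N
  haveI : IsAlgClosed Mbar := IsAlgClosure.isAlgClosed M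
  let ψ : Fbar →ₐ[N] Mbar := IsAlgClosed.lift
  have key : ∀ z : F ⊗[K] Kbar, ψ (f' z) = g' z := by
    intro z
    have hz : f' z = algebraMap N Fbar (e z) := by
      show f' z = ((e z : N) : Fbar)
      rw [AlgEquiv.ofInjective_apply]
    rw [hz, ψ.commutes]
    show h (e z) = g' z
    show g' (e.symm (e z)) = g' z
    rw [AlgEquiv.symm_apply_apply]
  refine ⟨ψ.toRingHom, ?_, ?_⟩
  · intro x
    have h1 : algebraMap F Fbar x = f' (x ⊗ₜ 1) := by
      show _ = Algebra.ofId F Fbar x * jF 1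
      rw [map_one, mul_one]; rfl
    have h2 : g' (x ⊗ₜ 1) = algebraMap M Mbar (ι x) := by
      show Algebra.ofId F Mbar x * jM 1 = _
      rw [map_one, mul_one]; rfl
    show ψ (algebraMap F Fbar x) = _
    rw [h1, key, h2]
  · intro x
    have h1 : jF x = f' ((1 : F) ⊗ₜ x) := by
      show _ = Algebra.ofId F Fbar 1 * jF x
      rw [map_one, one_mul]
    have h2 : g' ((1 : F) ⊗ₜ x) = jM x := by
      show Algebra.ofId F Mbar 1 * jM x = _
      rw [map_one, one_mul]
    show ψ (jF x) = _
    rw [h1, key, h2]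
end

section
/- Let L be a field of characteristic 0, let n ≥ 1, and let F = L(t_1, …, t_n) be the field of rational functions in n variables over L (the fraction field of the polynomial ring L[t_1, …, t_n]). If u, v ∈ F satisfy u^4 + v^4 + 1 = 0, then u and v lie in L. -/
universe u

open Polynomial UniqueFactorizationMonoid

/-- FLT exponent 4 for polynomials over a char-zero field, in proportional form. -/
lemma flt4_poly {K : Type u} [Field K] [CharZero K] {a b c : K[X]} (hc : c ≠ 0)
    (h : a ^ 4 + b ^ 4 + c ^ 4 = 0) :
    ∃ α β : K, a = Polynomial.C α * c ∧ b = Polynomial.C β * c := by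
  classical
  set g := EuclideanDomain.gcd (EuclideanDomain.gcd a b) c with hg
  have hgab : g ∣ a := (EuclideanDomain.gcd_dvd_left _ _).trans (EuclideanDomain.gcd_dvd_left a b)
  have hgb : g ∣ b := (EuclideanDomain.gcd_dvd_left _ _).trans (EuclideanDomain.gcd_dvd_right a b)
  have hgc : g ∣ c := EuclideanDomain.gcd_dvd_right _ _
  obtain ⟨a₁, ha⟩ := hgab
  obtain ⟨b₁, hb⟩ := hgb
  obtain ⟨c₁, hcc⟩ := hgc
  have hg0 : g ≠ 0 := fun h0 => hc (by rw [hcc, h0, zero_mul])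
  have hc₁ : c₁ ≠ 0 := fun h0 => hc (by rw [hcc, h0, mul_zero])
  -- no common divisor of all three (other than units)
  have key : ∀ p : K[X], p ∣ a₁ → p ∣ b₁ → p ∣ c₁ → IsUnit p := by
    intro p h1 h2 h3
    have hpa : g * p ∣ a := ha ▸ mul_dvd_mul_left g h1
    have hpb : g * p ∣ b := hb ▸ mul_dvd_mul_left g h2
    have hpc : g * p ∣ c := hcc ▸ mul_dvd_mul_left g h3
    have : g * p ∣ g * 1 := by
      rw [mul_one]
      exact EuclideanDomain.dvd_gcd (EuclideanDomain.dvd_gcd hpa hpb) hpc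
    exact isUnit_of_dvd_one ((mul_dvd_mul_iff_left hg0).mp this)
  -- reduced equation
  have heq₁ : a₁ ^ 4 + b₁ ^ 4 + c₁ ^ 4 = 0 := by
    have h4 : g ^ 4 * (a₁ ^ 4 + b₁ ^ 4 + c₁ ^ 4) = 0 := by
      rw [ha, hb, hcc] at h; linear_combination h
    exact (mul_eq_zero.mp h4).resolve_left (pow_ne_zero _ hg0)
  -- no prime divides two of them
  have keyab : ∀ p : K[X], Prime p → p ∣ a₁ → p ∣ b₁ → False := by
    intro p hp h1 h2
    have h3 : p ∣ c₁ ^ 4 := by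
      have : c₁ ^ 4 = -(a₁ ^ 4) + -(b₁ ^ 4) := by linear_combination heq₁
      rw [this]
      exact dvd_add (dvd_neg.mpr (dvd_pow h1 (by norm_num)))
        (dvd_neg.mpr (dvd_pow h2 (by norm_num)))
    exact hp.not_unit (key p h1 h2 (hp.dvd_of_dvd_pow h3))
  have keyac : ∀ p : K[X], Prime p → p ∣ a₁ → p ∣ c₁ → False := by
    intro p hp h1 h2
    have h3 : p ∣ b₁ ^ 4 := by
      have : b₁ ^ 4 = -(a₁ ^ 4) + -(c₁ ^ 4) := by linear_combination heq₁
      rw [this]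
      exact dvd_add (dvd_neg.mpr (dvd_pow h1 (by norm_num)))
        (dvd_neg.mpr (dvd_pow h2 (by norm_num)))
    exact hp.not_unit (key p h1 (hp.dvd_of_dvd_pow h3) h2)
  have keybc : ∀ p : K[X], Prime p → p ∣ b₁ → p ∣ c₁ → False := by
    intro p hp h1 h2
    have h3 : p ∣ a₁ ^ 4 := by
      have : a₁ ^ 4 = -(b₁ ^ 4) + -(c₁ ^ 4) := by linear_combination heq₁
      rw [this]
      exact dvd_add (dvd_neg.mpr (dvd_pow h1 (by norm_num)))
        (dvd_neg.mpr (dvd_pow h2 (by norm_num)))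
    exact hp.not_unit (key p (hp.dvd_of_dvd_pow h3) h1 h2)
  -- coprimality
  have cop : ∀ x y : K[X], ¬(x = 0 ∧ y = 0) →
      (∀ p : K[X], Prime p → p ∣ x → p ∣ y → False) → IsCoprime x y := by
    intro x y hxy hkey
    refine EuclideanDomain.isCoprime_of_dvd hxy ?_
    intro z hz hz0 hzx hzy
    obtain ⟨i, hi, hidvd⟩ := WfDvdMonoid.exists_irreducible_factor hz hz0
    exact hkey i hi.prime (hidvd.trans hzx) (hidvd.trans hzy)
  have copab : IsCoprime a₁ b₁ := by
    refine cop _ _ ?_ keyab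
    rintro ⟨h1, h2⟩
    rw [h1, h2] at heq₁
    exact pow_ne_zero 4 hc₁ (by linear_combination heq₁)
  have copac : IsCoprime a₁ c₁ := cop _ _ (fun ⟨_, h2⟩ => hc₁ h2) keyac
  have copbc : IsCoprime b₁ c₁ := cop _ _ (fun ⟨_, h2⟩ => hc₁ h2) keybc
  -- all three have natDegree 0
  have hdeg : a₁.natDegree = 0 ∧ b₁.natDegree = 0 ∧ c₁.natDegree = 0 := by
    by_cases ha₁ : a₁ = 0
    · subst ha₁
      have hd1 : b₁ ^ 4 ∣ c₁ ^ 4 := ⟨-1, by linear_combination heq₁⟩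
      have hd2 : c₁ ^ 4 ∣ b₁ ^ 4 := ⟨-1, by linear_combination heq₁⟩
      have cop4 : IsCoprime (b₁ ^ 4) (c₁ ^ 4) := copbc.pow
      have h1 : IsUnit (b₁ ^ 4) := cop4.isUnit_of_dvd' dvd_rfl hd1
      have h2 : IsUnit (c₁ ^ 4) := cop4.isUnit_of_dvd' hd2 dvd_rfl
      have d1 := natDegree_eq_zero_of_isUnit h1
      have d2 := natDegree_eq_zero_of_isUnit h2
      rw [natDegree_pow] at d1 d2
      exact ⟨natDegree_zero, by omega, by omega⟩
    by_cases hb₁ : b₁ = 0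
    · subst hb₁
      have hd1 : a₁ ^ 4 ∣ c₁ ^ 4 := ⟨-1, by linear_combination heq₁⟩
      have hd2 : c₁ ^ 4 ∣ a₁ ^ 4 := ⟨-1, by linear_combination heq₁⟩
      have cop4 : IsCoprime (a₁ ^ 4) (c₁ ^ 4) := copac.pow
      have h1 : IsUnit (a₁ ^ 4) := cop4.isUnit_of_dvd' dvd_rfl hd1
      have h2 : IsUnit (c₁ ^ 4) := cop4.isUnit_of_dvd' hd2 dvd_rfl
      have d1 := natDegree_eq_zero_of_isUnit h1
      have d2 := natDegree_eq_zero_of_isUnit h2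
      rw [natDegree_pow] at d1 d2
      exact ⟨by omega, natDegree_zero, by omega⟩
    · -- Mason–Stothers
      have habc := Polynomial.abc (pow_ne_zero 4 ha₁) (pow_ne_zero 4 hb₁) (pow_ne_zero 4 hc₁)
        copab.pow (by linear_combination heq₁)
      rcases habc with ⟨d1, d2, d3⟩ | ⟨d1, d2, d3⟩
      · exfalso
        have hrad : (radical (a₁ ^ 4 * b₁ ^ 4 * c₁ ^ 4)).natDegree
            ≤ a₁.natDegree + b₁.natDegree + c₁.natDegree := by
          have h1 : a₁ ^ 4 * b₁ ^ 4 * c₁ ^ 4 = (a₁ * b₁ * c₁) ^ 4 := by ring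
          rw [h1, radical_pow _ (by norm_num : (4:ℕ) ≠ 0)]
          calc (radical (a₁ * b₁ * c₁)).natDegree
              ≤ (a₁ * b₁ * c₁).natDegree :=
                Polynomial.natDegree_le_of_dvd (radical_dvd_self (a := a₁ * b₁ * c₁))
                  (by exact mul_ne_zero (mul_ne_zero ha₁ hb₁) hc₁)
            _ = a₁.natDegree + b₁.natDegree + c₁.natDegree := by
                rw [Polynomial.natDegree_mul (mul_ne_zero ha₁ hb₁) hc₁,
                  Polynomial.natDegree_mul ha₁ hb₁]
        rw [natDegree_pow] at d1 d2 d3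
        omega
      · have e1 := natDegree_eq_zero_of_derivative_eq_zero d1
        have e2 := natDegree_eq_zero_of_derivative_eq_zero d2
        have e3 := natDegree_eq_zero_of_derivative_eq_zero d3
        rw [natDegree_pow] at e1 e2 e3
        exact ⟨by omega, by omega, by omega⟩
  obtain ⟨da, db, dc⟩ := hdeg
  obtain ⟨a₀, rfl⟩ := Polynomial.natDegree_eq_zero.mp da
  obtain ⟨b₀, rfl⟩ := Polynomial.natDegree_eq_zero.mp db
  obtain ⟨c₀, rfl⟩ := Polynomial.natDegree_eq_zero.mp dc
  have hγ : c₀ ≠ 0 := fun h0 => hc₁ (by rw [h0, map_zero])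
  refine ⟨a₀ / c₀, b₀ / c₀, ?_, ?_⟩
  · rw [ha, hcc, mul_left_comm, ← Polynomial.C_mul, div_mul_cancel₀ _ hγ]
  · rw [hb, hcc, mul_left_comm, ← Polynomial.C_mul, div_mul_cancel₀ _ hγ]

/-- Multivariable version, by induction on the number of variables. -/
lemma flt4_mv (L : Type u) [Field L] [CharZero L] :
    ∀ (n : ℕ) (a b c : MvPolynomial (Fin n) L), c ≠ 0 → a ^ 4 + b ^ 4 + c ^ 4 = 0 →
      ∃ α β : L, a = MvPolynomial.C α * c ∧ b = MvPolynomial.C β * c := by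
  intro n
  induction n with
  | zero =>
    intro a b c hc heq
    obtain ⟨a₀, rfl⟩ := MvPolynomial.C_surjective (Fin 0) a
    obtain ⟨b₀, rfl⟩ := MvPolynomial.C_surjective (Fin 0) b
    obtain ⟨c₀, rfl⟩ := MvPolynomial.C_surjective (Fin 0) c
    have hc₀ : c₀ ≠ 0 := fun h0 => hc (by rw [h0, map_zero])
    exact ⟨a₀ / c₀, b₀ / c₀, by rw [← map_mul, div_mul_cancel₀ _ hc₀],
      by rw [← map_mul, div_mul_cancel₀ _ hc₀]⟩
  | succ n ih =>
    intro a b c hc heq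
    set R := MvPolynomial (Fin n) L
    set K' := FractionRing R
    set φ := MvPolynomial.finSuccEquiv L n with hφ
    have heq' : (φ a) ^ 4 + (φ b) ^ 4 + (φ c) ^ 4 = 0 := by
      have := congrArg φ heq
      simpa [map_add, map_pow] using this
    have hc' : φ c ≠ 0 := fun h0 => hc (by simpa using congrArg φ.symm h0)
    -- map to polynomials over the fraction field
    have hinj : Function.Injective (algebraMap R K') := IsFractionRing.injective R K'
    have hψ : Function.Injective (Polynomial.map (algebraMap R K')) :=
      Polynomial.map_injective _ hinj
    have heqA : ((φ a).map (algebraMap R K')) ^ 4 + ((φ b).map (algebraMap R K')) ^ 4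
        + ((φ c).map (algebraMap R K')) ^ 4 = 0 := by
      have := congrArg (Polynomial.map (algebraMap R K')) heq'
      simpa [Polynomial.map_add, Polynomial.map_pow] using this
    have hCne : (φ c).map (algebraMap R K') ≠ 0 := fun h0 => hc' (hψ (by simpa using h0))
    obtain ⟨α', β', hA, hB⟩ := flt4_poly hCne heqA
    obtain ⟨p, q, hq, hpq⟩ := IsFractionRing.div_surjective (A := R) α'
    obtain ⟨r, s, hs, hrs⟩ := IsFractionRing.div_surjective (A := R) β'
    have hq0 : q ≠ 0 := nonZeroDivisors.ne_zero hq
    have hs0 : s ≠ 0 := nonZeroDivisors.ne_zero hs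
    have hqK : algebraMap R K' q ≠ 0 := fun h0 => hq0 (hinj (by simpa using h0))
    have hsK : algebraMap R K' s ≠ 0 := fun h0 => hs0 (hinj (by simpa using h0))
    have hα : algebraMap R K' q * α' = algebraMap R K' p := by
      rw [← hpq, mul_div_cancel₀ _ hqK]
    have hβ : algebraMap R K' s * β' = algebraMap R K' r := by
      rw [← hrs, mul_div_cancel₀ _ hsK]
    -- relations in R[X]
    have E1 : Polynomial.C q * φ a = Polynomial.C p * φ c := by
      apply hψ
      rw [Polynomial.map_mul, Polynomial.map_mul, Polynomial.map_C, Polynomial.map_C, hA]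
      rw [← mul_assoc, ← Polynomial.C_mul, hα]
    have E2 : Polynomial.C s * φ b = Polynomial.C r * φ c := by
      apply hψ
      rw [Polynomial.map_mul, Polynomial.map_mul, Polynomial.map_C, Polynomial.map_C, hB]
      rw [← mul_assoc, ← Polynomial.C_mul, hβ]
    have F1 : (Polynomial.C q) ^ 4 * (φ a) ^ 4 = (Polynomial.C p) ^ 4 * (φ c) ^ 4 := by
      have := congrArg (· ^ 4) E1
      simpa [mul_pow] using this
    have F2 : (Polynomial.C s) ^ 4 * (φ b) ^ 4 = (Polynomial.C r) ^ 4 * (φ c) ^ 4 := by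
      have := congrArg (· ^ 4) E2
      simpa [mul_pow] using this
    have E4 : ((Polynomial.C p * Polynomial.C s) ^ 4 + (Polynomial.C r * Polynomial.C q) ^ 4
        + (Polynomial.C q * Polynomial.C s) ^ 4) * (φ c) ^ 4 = 0 := by
      linear_combination (-(Polynomial.C s : Polynomial R) ^ 4) * F1
        + (-(Polynomial.C q : Polynomial R) ^ 4) * F2
        + ((Polynomial.C q : Polynomial R) ^ 4 * (Polynomial.C s) ^ 4) * heq'
    have E5 : (p * s) ^ 4 + (r * q) ^ 4 + (q * s) ^ 4 = 0 := by
      have h0 : ((Polynomial.C p * Polynomial.C s) ^ 4 + (Polynomial.C r * Polynomial.C q) ^ 4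
          + (Polynomial.C q * Polynomial.C s) ^ 4) = (0 : Polynomial R) :=
        (mul_eq_zero.mp E4).resolve_right (pow_ne_zero _ hc')
      have h1 : Polynomial.C ((p * s) ^ 4 + (r * q) ^ 4 + (q * s) ^ 4) = (0 : Polynomial R) := by
        rw [map_add, map_add, map_pow, map_pow, map_pow, map_mul, map_mul, map_mul]
        exact h0
      exact Polynomial.C_eq_zero.mp h1
    obtain ⟨α, β, hps, hrq⟩ := ih (p * s) (r * q) (q * s) (mul_ne_zero hq0 hs0) E5
    have hp : p = MvPolynomial.C α * q := by
      apply mul_right_cancel₀ hs0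
      rw [hps]; ring
    have hr : r = MvPolynomial.C β * s := by
      apply mul_right_cancel₀ hq0
      rw [hrq]; ring
    have hCq : (Polynomial.C q : Polynomial R) ≠ 0 := fun h0 => hq0 (Polynomial.C_eq_zero.mp h0)
    have Ea : φ a = Polynomial.C (MvPolynomial.C α) * φ c := by
      apply mul_left_cancel₀ hCq
      rw [E1, hp, map_mul]; ring
    have Eb : φ b = Polynomial.C (MvPolynomial.C β) * φ c := by
      apply mul_left_cancel₀ (fun h0 => hs0 (Polynomial.C_eq_zero.mp h0) : (Polynomial.C s : Polynomial R) ≠ 0)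
      rw [E2, hr, map_mul]; ring
    have hsymmC : ∀ γ : L, φ.symm (Polynomial.C (MvPolynomial.C γ)) = MvPolynomial.C γ := by
      intro γ
      have := congrFun (congrArg (fun f => f.toFun) (MvPolynomial.finSuccEquiv_comp_C_eq_C (R := L) n)) γ
      exact this
    refine ⟨α, β, ?_, ?_⟩
    · have := congrArg φ.symm Ea
      rw [φ.symm_apply_apply, map_mul, hsymmC] at this
      rw [this, φ.symm_apply_apply]
    · have := congrArg φ.symm Eb
      rw [φ.symm_apply_apply, map_mul, hsymmC] at this
      rw [this, φ.symm_apply_apply]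

/-- Every solution of `u ^ 4 + v ^ 4 + 1 = 0` in a rational function field
`L(t_1, …, t_n)` (`L` of characteristic zero, `n ≥ 1`) is constant, i.e. lies
in `L`. -/
theorem stmt6 (L : Type u) [Field L] [CharZero L] (n : ℕ) (hn : 1 ≤ n)
    (F : Type u) [Field F] [Algebra (MvPolynomial (Fin n) L) F]
    [IsFractionRing (MvPolynomial (Fin n) L) F]
    [Algebra L F] [IsScalarTower L (MvPolynomial (Fin n) L) F]
    (u v : F) (h : u ^ 4 + v ^ 4 + 1 = 0) :
    u ∈ (algebraMap L F).range ∧ v ∈ (algebraMap L F).range := by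
  set R := MvPolynomial (Fin n) L
  have hinj : Function.Injective (algebraMap R F) := IsFractionRing.injective R F
  obtain ⟨a, d₁, hd₁, hu⟩ := IsFractionRing.div_surjective (A := R) u
  obtain ⟨b, d₂, hd₂, hv⟩ := IsFractionRing.div_surjective (A := R) v
  have hd₁0 : d₁ ≠ 0 := nonZeroDivisors.ne_zero hd₁
  have hd₂0 : d₂ ≠ 0 := nonZeroDivisors.ne_zero hd₂
  have hd1F : algebraMap R F d₁ ≠ 0 := fun h0 => hd₁0 (hinj (by simpa using h0))
  have hd2F : algebraMap R F d₂ ≠ 0 := fun h0 => hd₂0 (hinj (by simpa using h0))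
  have hdF : algebraMap R F (d₁ * d₂) ≠ 0 := by
    rw [map_mul]; exact mul_ne_zero hd1F hd2F
  have heqR : (a * d₂) ^ 4 + (b * d₁) ^ 4 + (d₁ * d₂) ^ 4 = 0 := by
    apply hinj
    rw [map_add, map_add, map_pow, map_pow, map_pow, map_mul, map_mul, map_mul, map_zero]
    have hu' : algebraMap R F a = u * algebraMap R F d₁ := by
      rw [← hu, div_mul_cancel₀ _ hd1F]
    have hv' : algebraMap R F b = v * algebraMap R F d₂ := by
      rw [← hv, div_mul_cancel₀ _ hd2F]
    rw [hu', hv']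
    have h4 : (u ^ 4 + v ^ 4 + 1) * (algebraMap R F d₁ * algebraMap R F d₂) ^ 4 = 0 := by
      rw [h, zero_mul]
    linear_combination h4
  obtain ⟨α, β, hα, hβ⟩ := flt4_mv L n (a * d₂) (b * d₁) (d₁ * d₂)
    (mul_ne_zero hd₁0 hd₂0) heqR
  have hu' : algebraMap R F a = u * algebraMap R F d₁ := by
    rw [← hu, div_mul_cancel₀ _ hd1F]
  have hv' : algebraMap R F b = v * algebraMap R F d₂ := by
    rw [← hv, div_mul_cancel₀ _ hd2F]
  have hCmap : ∀ γ : L, algebraMap R F (MvPolynomial.C γ) = algebraMap L F γ := by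
    intro γ
    rw [IsScalarTower.algebraMap_apply L R F, MvPolynomial.algebraMap_eq]
  constructor
  · refine ⟨α, ?_⟩
    have h1 := congrArg (algebraMap R F) hα
    rw [map_mul, map_mul, map_mul, hu', hCmap] at h1
    have key : u * algebraMap R F (d₁ * d₂) = algebraMap L F α * algebraMap R F (d₁ * d₂) := by
      rw [map_mul]
      linear_combination h1
    exact (mul_right_cancel₀ hdF key).symm
  · refine ⟨β, ?_⟩
    have h1 := congrArg (algebraMap R F) hβ
    rw [map_mul, map_mul, map_mul, hv', hCmap] at h1
    have key : v * algebraMap R F (d₁ * d₂) = algebraMap L F β * algebraMap R F (d₁ * d₂) := by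
      rw [map_mul]
      linear_combination h1
    exact (mul_right_cancel₀ hdF key).symm
end

section
/- Let K be a field of characteristic 0 containing (a copy of) the field of real algebraic numbers ℝ ∩ ℚ̄, and suppose K avoids C. Define a binary relation R on K by R(a, b) if and only if there exists t ∈ K with t ≠ 0 and b − a = t^4. Then: (1) for all natural numbers i < j, R(i, j) holds (where i, j are viewed as elements of K); and (2) there are no a_1, a_2, a_3 ∈ K with R(a_1, a_2), R(a_2, a_3), and R(a_3, a_1). In particular, from any t_1, t_2, t_3 ∈ K, all nonzero, with a_2 − a_1 = t_1^4, a_3 − a_2 = t_2^4, a_1 − a_3 = t_3^4, one obtains u = t_1/t_3 and v = t_2/t_3 in K with u^4 + v^4 + 1 = 0. -/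
universe u

/-- In a `C`-avoiding field of characteristic 0 containing the real algebraic
numbers, the relation `R(a, b) ↔ ∃ t ≠ 0, b - a = t ^ 4` linearly orders the
naturals but admits no 3-cycle: the `SOP₃` witness. -/
theorem stmt18 (K : Type u) [Field K] [CharZero K]
    (hemb : Nonempty ((integralClosure ℚ ℝ) →+* K))
    (hC : ¬ ∃ x y : K, x ^ 4 + y ^ 4 + 1 = 0) :
    (∀ i j : ℕ, i < j → ∃ t : K, t ≠ 0 ∧ (j : K) - (i : K) = t ^ 4) ∧
    (¬ ∃ a₁ a₂ a₃ : K,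
        (∃ t : K, t ≠ 0 ∧ a₂ - a₁ = t ^ 4) ∧
        (∃ t : K, t ≠ 0 ∧ a₃ - a₂ = t ^ 4) ∧
        (∃ t : K, t ≠ 0 ∧ a₁ - a₃ = t ^ 4)) ∧
    (∀ a₁ a₂ a₃ t₁ t₂ t₃ : K, t₁ ≠ 0 → t₂ ≠ 0 → t₃ ≠ 0 →
        a₂ - a₁ = t₁ ^ 4 → a₃ - a₂ = t₂ ^ 4 → a₁ - a₃ = t₃ ^ 4 →
        (t₁ / t₃) ^ 4 + (t₂ / t₃) ^ 4 + 1 = 0) := by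
  obtain ⟨f⟩ := hemb
  have key : ∀ a₁ a₂ a₃ t₁ t₂ t₃ : K, t₁ ≠ 0 → t₂ ≠ 0 → t₃ ≠ 0 →
      a₂ - a₁ = t₁ ^ 4 → a₃ - a₂ = t₂ ^ 4 → a₁ - a₃ = t₃ ^ 4 →
      (t₁ / t₃) ^ 4 + (t₂ / t₃) ^ 4 + 1 = 0 := by
    intro a₁ a₂ a₃ t₁ t₂ t₃ h1 h2 h3 e1 e2 e3
    have hsum : t₁ ^ 4 + t₂ ^ 4 + t₃ ^ 4 = 0 := by
      rw [← e1, ← e2, ← e3]; ring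
    field_simp
    linear_combination hsum
  refine ⟨?_, ?_, key⟩
  · intro i j hij
    set n := j - i with hn
    have hnpos : 0 < n := Nat.sub_pos_of_lt hij
    set r : ℝ := (n : ℝ) ^ ((4 : ℝ)⁻¹) with hr
    have hr4 : r ^ (4 : ℕ) = (n : ℝ) := by
      rw [hr, ← Real.rpow_natCast ((n : ℝ) ^ ((4 : ℝ)⁻¹)) 4,
        ← Real.rpow_mul (by positivity)]
      norm_num
    have hint : IsIntegral ℚ r := by
      refine ⟨Polynomial.X ^ 4 - Polynomial.C (n : ℚ), ?_, ?_⟩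
      · apply Polynomial.monic_X_pow_sub_C _ (by norm_num)
      · simp [Polynomial.eval₂_sub, hr4]
    set t0 : integralClosure ℚ ℝ := ⟨r, hint⟩ with ht0
    have ht04 : t0 ^ (4 : ℕ) = (n : integralClosure ℚ ℝ) := by
      ext
      push_cast
      simpa using hr4
    have hpow : (f t0) ^ 4 = (n : K) := by
      rw [← map_pow, ht04, map_natCast]
    refine ⟨f t0, ?_, ?_⟩
    · intro h0
      rw [h0] at hpow
      have : (n : K) = 0 := by simpa using hpow.symm
      exact hnpos.ne' (by exact_mod_cast this)
    · rw [hpow, hn, Nat.cast_sub hij.le]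
  · rintro ⟨a₁, a₂, a₃, ⟨t₁, h1, e1⟩, ⟨t₂, h2, e2⟩, ⟨t₃, h3, e3⟩⟩
    exact hC ⟨t₁ / t₃, t₂ / t₃, key a₁ a₂ a₃ t₁ t₂ t₃ h1 h2 h3 e1 e2 e3⟩
end
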